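/- arXiv:1908.09666 — 2 statements merged into one kernel-verified Lean document; each statement's English description precedes it below -/
import Mathlib

section
/- Setting K = 0 in the generalized Wick theorem: the ordinary product of polynomials is recovered from the star product by f₁(x₁)⋯f_d(x_d) = Σ_{k≥0} ((−ℏ)^k/k!) Σ_{deg M = 2k} (k choose m₁₂,…,m_{d−1,d}) [f₁^{(α₁)}(x₁) ⋆_{K′} ⋯ ⋆_{K′} f_d^{(α_d)}(x_d)] · Π_{i<j} (K′_{ij})^{m_{ij}}. -/
/- Statement 11: setting `K = 0` in the generalized Wick theorem, the ordinary
product of polynomials is recovered from the star product `⋆_{K′}`: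
`f₁(x₁)⋯f_d(x_d) = Σ_{k≥0} ((−ℏ)^k/k!) Σ_{deg M = 2k}
(k choose m₁₂,…,m_{d−1,d}) [f₁^{(α₁)}(x₁) ⋆_{K′} ⋯ ⋆_{K′} f_d^{(α_d)}(x_d)]
Π_{i<j} (K′_{ij})^{m_{ij}}`. -/

open MvPolynomial

noncomputable section

variable {R : Type} [CommRing R] [Algebra ℚ R]

/-- the finset of pairs `i < j`. -/
def pairs (d : ℕ) : Finset (Fin d × Fin d) :=
  Finset.univ.filter (fun p : Fin d × Fin d => p.1 < p.2)

/-- the operator `Σ_{i<j} K_{ij} ∂_i ∂_j`. -/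
def Lop {d : ℕ} (K : Fin d → Fin d → R) :
    Module.End R (MvPolynomial (Fin d) R) :=
  ∑ p ∈ pairs d, K p.1 p.2 • ((pderiv p.1).toLinearMap ∘ₗ (pderiv p.2).toLinearMap)

/-- the row sums `α_i = Σ_j m_{ij}`. -/
def rowSum {d : ℕ} (M : Fin d × Fin d → ℕ) (i : Fin d) : ℕ :=
  ∑ j : Fin d, (if i < j then M (i, j) else if j < i then M (j, i) else 0)

/-- `f₁(x₁) ⋆_K ⋯ ⋆_K f_d(x_d) = exp{ℏ Σ_{i<j} K_{ij} ∂_i∂_j}(f₁(x₁)⋯f_d(x_d))`. -/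
def multiStar {d : ℕ} (ℏ : R) (K : Fin d → Fin d → R)
    (f : Fin d → Polynomial R) : MvPolynomial (Fin d) R :=
  finsum fun n : ℕ =>
    (n.factorial : ℚ)⁻¹ •
      (ℏ ^ n • ((Lop K ^ n) (∏ i : Fin d, Polynomial.aeval (X i) (f i))))

/-!
Write `L = Σ_{i<j} K′_{ij} ∂_i ∂_j`, so that `g₁(x₁) ⋆ ⋯ ⋆ g_d(x_d) = exp(ℏL)(g₁(x₁)⋯g_d(x_d))`.
The operators `∂_i ∂_j` commute, so the multinomial theorem gives
`L^k (f₁(x₁)⋯f_d(x_d)) = Σ_{|M| = k} (k choose M) Π (K′_{ij})^{m_{ij}} f₁^{(α₁)}(x₁)⋯f_d^{(α_d)}(x_d)`.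
Hence the inner sum over `M` is `L^k exp(ℏL)(f₁⋯f_d)` and the right-hand side is
`exp(-ℏL) exp(ℏL)(f₁⋯f_d)`. Since `Σ_i α_i = 2k`, a large power of `L` kills the product, so `L`
is nilpotent on an `L`-stable subspace containing it, where `exp(-ℏL) exp(ℏL) = 1`.
-/

open Finset
open scoped Nat

namespace Module.End

variable {A V : Type*} [CommRing A] [AddCommGroup V] [Module A V]

lemma pow_apply_eq_zero_of_le {T : Module.End A V} {v : V} {N n : ℕ} (hv : (T ^ N) v = 0)
    (hn : N ≤ n) : (T ^ n) v = 0 := by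
  rw [← Nat.sub_add_cancel hn, pow_add, mul_apply, hv, map_zero]

lemma coe_pow_restrict_apply {T : Module.End A V} {W : Submodule A V} (hW : ∀ x ∈ W, T x ∈ W)
    (n : ℕ) (x : W) : ((T.restrict hW ^ n) x : V) = (T ^ n) x := by
  rw [pow_restrict, LinearMap.coe_restrict_apply]

variable [Module ℚ V]

/-- `exp T` applied to `v`. This is only meaningful when `(T ^ N) v = 0` for some `N`; otherwise
the `finsum` has infinite support and its value is `0`. -/
noncomputable def expApply (T : Module.End A V) (v : V) : V :=
  ∑ᶠ n : ℕ, (n ! : ℚ)⁻¹ • (T ^ n) v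

variable {T : Module.End A V} {v : V} {N : ℕ}

lemma expApply_eq_sum (hv : (T ^ N) v = 0) :
    T.expApply v = ∑ n ∈ range N, (n ! : ℚ)⁻¹ • (T ^ n) v := by
  refine finsum_eq_sum_of_support_subset _ fun n hn => ?_
  by_contra hN
  simp only [coe_range, Set.mem_Iio, not_lt] at hN
  exact hn (by simp only [pow_apply_eq_zero_of_le hv hN, smul_zero])

variable [Algebra ℚ A] [IsScalarTower ℚ A V]

lemma coe_exp_restrict_apply {W : Submodule A V} (hW : ∀ x ∈ W, T x ∈ W)
    (hT : IsNilpotent (T.restrict hW)) (x : W) :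
    (IsNilpotent.exp (T.restrict hW) x : V) = T.expApply x := by
  obtain ⟨N, hN⟩ := hT
  have hx : (T ^ N) x = 0 := by
    rw [← coe_pow_restrict_apply hW, hN, LinearMap.zero_apply, Submodule.coe_zero]
  rw [IsNilpotent.exp_eq_sum hN, expApply_eq_sum hx, LinearMap.sum_apply, Submodule.coe_sum]
  refine sum_congr rfl fun n _ => ?_
  rw [LinearMap.smul_apply, Submodule.coe_smul_of_tower, coe_pow_restrict_apply]

/-- `T` is nilpotent on the `T`-stable submodule `ker (T ^ N)` containing `v`. -/
lemma expApply_neg_expApply (hv : (T ^ N) v = 0) : (-T).expApply (T.expApply v) = v := by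
  set W := LinearMap.ker (T ^ N)
  have hW : ∀ x ∈ W, T x ∈ W := fun x hx => by
    rw [LinearMap.mem_ker, ← mul_apply, ← pow_succ, pow_succ', mul_apply,
      LinearMap.mem_ker.1 hx, map_zero]
  have hW' : ∀ x ∈ W, (-T) x ∈ W := fun x hx => W.neg_mem (hW x hx)
  have hS : IsNilpotent (T.restrict hW) := ⟨N, by
    ext x
    rw [coe_pow_restrict_apply, LinearMap.zero_apply, Submodule.coe_zero, LinearMap.mem_ker.1 x.2]⟩
  have hneg : (-T).restrict hW' = -T.restrict hW := by ext; simp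
  have key := congrArg Subtype.val
    (LinearMap.congr_fun (IsNilpotent.exp_neg_mul_exp_self hS) ⟨v, hv⟩)
  rwa [mul_apply, ← hneg, coe_exp_restrict_apply hW' (hneg ▸ hS.neg),
    coe_exp_restrict_apply hW hS] at key

end Module.End

namespace MvPolynomial

variable {S σ : Type*} [CommRing S]

theorem pderiv_comm (i j : σ) (p : MvPolynomial σ S) :
    pderiv i (pderiv j p) = pderiv j (pderiv i p) := by
  classical
  have h : ⁅(pderiv i : Derivation S (MvPolynomial σ S) (MvPolynomial σ S)), pderiv j⁆ =
      (0 : Derivation S (MvPolynomial σ S) (MvPolynomial σ S)) := by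
    refine derivation_ext fun k => ?_
    rw [Derivation.commutator_apply, pderiv_X, pderiv_X, Pi.single_apply, Pi.single_apply]
    split_ifs <;> simp
  exact sub_eq_zero.1 (by rw [← Derivation.commutator_apply, h]; rfl)

theorem pderiv_aeval_X_self (i : σ) (q : Polynomial S) :
    pderiv i (Polynomial.aeval (X i : MvPolynomial σ S) q) =
      Polynomial.aeval (X i) (Polynomial.derivative q) := by
  simp

theorem pderiv_aeval_X_of_ne {i j : σ} (h : j ≠ i) (q : Polynomial S) :
    pderiv i (Polynomial.aeval (X j : MvPolynomial σ S) q) = 0 := by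
  simp [pderiv_X_of_ne h]

end MvPolynomial

namespace StarProduct

open Module.End

variable {S : Type} [CommRing S] {d : ℕ}

def iterDerivProd (f : Fin d → Polynomial S) (c : Fin d → ℕ) : MvPolynomial (Fin d) S :=
  ∏ i, Polynomial.aeval (X i) (Polynomial.derivative^[c i] (f i))

theorem pderiv_iterDerivProd (f : Fin d → Polynomial S) (c : Fin d → ℕ) (i : Fin d) :
    pderiv i (iterDerivProd f c) = iterDerivProd f (c + Pi.single i 1) := by
  have hrest : pderiv i (∏ j ∈ univ.erase i,
      Polynomial.aeval (X j : MvPolynomial (Fin d) S) (Polynomial.derivative^[c j] (f j))) = 0 := by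
    refine prod_induction _ (fun p => pderiv i p = 0) (fun a b ha hb => ?_) pderiv_one
      fun j hj => pderiv_aeval_X_of_ne (ne_of_mem_erase hj) _
    rw [pderiv_mul, ha, hb, mul_zero, zero_mul, add_zero]
  have hupd : ∀ j ∈ univ.erase i, (c + Pi.single i 1 : Fin d → ℕ) j = c j := fun j hj => by
    simp [ne_of_mem_erase hj]
  unfold iterDerivProd
  rw [← mul_prod_erase univ _ (mem_univ i), ← mul_prod_erase univ _ (mem_univ i), pderiv_mul,
    hrest, mul_zero, add_zero, pderiv_aeval_X_self, Pi.add_apply, Pi.single_eq_same,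
    Function.iterate_succ_apply']
  exact congrArg _ (prod_congr rfl fun j hj => by rw [hupd j hj])

def pderivPair (p : Fin d × Fin d) : Module.End S (MvPolynomial (Fin d) S) :=
  (pderiv p.1).toLinearMap * (pderiv p.2).toLinearMap

theorem pderivPair_apply (p : Fin d × Fin d) (x : MvPolynomial (Fin d) S) :
    pderivPair p x = pderiv p.1 (pderiv p.2 x) :=
  rfl

theorem commute_pderivPair (p q : Fin d × Fin d) :
    Commute (pderivPair (S := S) p) (pderivPair q) := by
  have h : ∀ i j : Fin d, Commute (pderiv i).toLinearMap
      ((pderiv j).toLinearMap : Module.End S (MvPolynomial (Fin d) S)) :=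
    fun i j => LinearMap.ext (pderiv_comm i j)
  exact ((h _ _).mul_right (h _ _)).mul_left ((h _ _).mul_right (h _ _))

theorem pderivPair_pow_apply_iterDerivProd (p : Fin d × Fin d) (m : ℕ)
    (f : Fin d → Polynomial S) (c : Fin d → ℕ) :
    (pderivPair p ^ m) (iterDerivProd f c) =
      iterDerivProd f (c + m • (Pi.single p.1 1 + Pi.single p.2 1)) := by
  induction m generalizing c with
  | zero => simp
  | succ m ih =>
    rw [pow_succ, mul_apply, pderivPair_apply, pderiv_iterDerivProd, pderiv_iterDerivProd, ih,
      succ_nsmul]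
    congr 1
    abel

theorem noncommProd_apply_iterDerivProd (K : Fin d → Fin d → S) (s : Finset (Fin d × Fin d))
    (M : Fin d × Fin d → ℕ) (hc) (f : Fin d → Polynomial S) (c : Fin d → ℕ) :
    (s.noncommProd (fun p => (K p.1 p.2 • pderivPair p) ^ M p) hc) (iterDerivProd f c) =
      (∏ p ∈ s, K p.1 p.2 ^ M p) •
        iterDerivProd f (c + ∑ p ∈ s, M p • (Pi.single p.1 1 + Pi.single p.2 1)) := by
  classical
  induction s using Finset.induction_on generalizing c with
  | empty => simp
  | insert a s ha ih =>
    rw [noncommProd_insert_of_notMem _ _ _ _ ha, mul_apply, ih, map_smul, smul_pow,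
      LinearMap.smul_apply, pderivPair_pow_apply_iterDerivProd, prod_insert ha, sum_insert ha,
      smul_smul, mul_comm, add_assoc, add_comm (∑ p ∈ s, _)]

theorem rowSum_eq_sum_pairs (M : Fin d × Fin d → ℕ) :
    rowSum M = ∑ p ∈ pairs d, M p • (Pi.single p.1 1 + Pi.single p.2 1) := by
  funext i
  have hsplit : ∀ j, (if i < j then M (i, j) else if j < i then M (j, i) else 0) =
      (if i < j then M (i, j) else 0) + (if j < i then M (j, i) else 0) := fun j => by
    split_ifs <;> omega
  have hcomm : ∀ (a b : Prop) [Decidable a] [Decidable b] (v : ℕ),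
      (if a then (if b then v else 0) else 0) = if b then (if a then v else 0) else 0 := by
    intros; split_ifs <;> rfl
  simp only [rowSum, hsplit, sum_add_distrib, Finset.sum_apply, pairs, sum_filter,
    Fintype.sum_prod_type, Pi.smul_apply, Pi.add_apply, Pi.single_apply, smul_eq_mul, mul_add,
    mul_ite, mul_one, mul_zero, hcomm (_ < _), sum_ite_irrel, sum_const_zero, sum_ite_eq,
    mem_univ, if_true]

theorem sum_rowSum (M : Fin d × Fin d → ℕ) : ∑ i, rowSum M i = 2 * ∑ p ∈ pairs d, M p := by
  simp only [rowSum_eq_sum_pairs, Finset.sum_apply, Pi.smul_apply, Pi.add_apply, smul_eq_mul]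
  rw [sum_comm, mul_sum]
  refine sum_congr rfl fun p _ => ?_
  simp only [mul_add, sum_add_distrib, ← mul_sum, sum_pi_single', mem_univ, if_true]
  ring

theorem iterDerivProd_eq_zero (f : Fin d → Polynomial S) {c : Fin d → ℕ}
    (hc : ∑ i, (f i).natDegree < ∑ i, c i) : iterDerivProd f c = 0 := by
  obtain ⟨i, -, hi⟩ := exists_lt_of_sum_lt hc
  exact prod_eq_zero (mem_univ i) (by rw [Polynomial.iterate_derivative_eq_zero hi, map_zero])

theorem Lop_eq_sum_pderivPair (K : Fin d → Fin d → S) :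
    Lop K = ∑ p ∈ pairs d, K p.1 p.2 • pderivPair p :=
  rfl

theorem Lop_pow_apply_iterDerivProd (K : Fin d → Fin d → S) (k : ℕ) (f : Fin d → Polynomial S)
    (c : Fin d → ℕ) :
    (Lop K ^ k) (iterDerivProd f c) =
      ∑ M ∈ piAntidiag (pairs d) k, Nat.multinomial (pairs d) M •
        (∏ p ∈ pairs d, K p.1 p.2 ^ M p) • iterDerivProd f (c + rowSum M) := by
  have hc : (pairs d : Set (Fin d × Fin d)).Pairwise
      (Function.onFun Commute fun p => (K p.1 p.2 • pderivPair p : Module.End S _)) :=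
    fun p _ q _ _ => ((commute_pderivPair p q).smul_left _).smul_right _
  rw [Lop_eq_sum_pderivPair, sum_pow_eq_sum_piAntidiag_of_commute _ _ hc, LinearMap.sum_apply]
  refine sum_congr rfl fun M _ => ?_
  rw [mul_apply, Module.End.natCast_apply, noncommProd_apply_iterDerivProd, rowSum_eq_sum_pairs]

theorem smul_Lop_pow_apply_iterDerivProd_eq_zero (ℏ : S) (K : Fin d → Fin d → S)
    (f : Fin d → Polynomial S) (c : Fin d → ℕ) :
    ((ℏ • Lop K) ^ (∑ i, (f i).natDegree + 1)) (iterDerivProd f c) = 0 := by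
  suffices h : (Lop K ^ (∑ i, (f i).natDegree + 1)) (iterDerivProd f c) = 0 by
    rw [smul_pow, LinearMap.smul_apply, h, smul_zero]
  rw [Lop_pow_apply_iterDerivProd]
  refine sum_eq_zero fun M hM => ?_
  rw [iterDerivProd_eq_zero, smul_zero, smul_zero]
  simp only [Pi.add_apply, sum_add_distrib, sum_rowSum, (mem_piAntidiag.1 hM).1]
  omega

theorem multiStar_eq_expApply (ℏ : R) (K : Fin d → Fin d → R) (g : Fin d → Polynomial R) :
    multiStar ℏ K g = (ℏ • Lop K).expApply (∏ i, Polynomial.aeval (X i) (g i)) :=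
  finsum_congr fun n => by rw [smul_pow, LinearMap.smul_apply]

theorem sum_multiStar_mul_prod_C (ℏ : R) (K : Fin d → Fin d → R) (f : Fin d → Polynomial R)
    (k : ℕ) :
    ∑ M ∈ piAntidiag (pairs d) k, Nat.multinomial (pairs d) M •
        (multiStar ℏ K (fun i => Polynomial.derivative^[rowSum M i] (f i)) *
          ∏ p ∈ pairs d, C (K p.1 p.2) ^ M p) =
      (Lop K ^ k) ((ℏ • Lop K).expApply (iterDerivProd f 0)) := by
  have hT := smul_Lop_pow_apply_iterDerivProd_eq_zero ℏ K f
  set T := ℏ • Lop K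
  have hterm : ∀ M : Fin d × Fin d → ℕ,
      multiStar ℏ K (fun i => Polynomial.derivative^[rowSum M i] (f i)) *
          ∏ p ∈ pairs d, C (K p.1 p.2) ^ M p =
        ∑ n ∈ range (∑ i, (f i).natDegree + 1), (n ! : ℚ)⁻¹ •
          (T ^ n) ((∏ p ∈ pairs d, K p.1 p.2 ^ M p) • iterDerivProd f (0 + rowSum M)) := by
    intro M
    have hC : ∏ p ∈ pairs d, (C (K p.1 p.2) : MvPolynomial (Fin d) R) ^ M p =
        C (∏ p ∈ pairs d, K p.1 p.2 ^ M p) := by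
      simp only [map_prod, map_pow]
    rw [zero_add, multiStar_eq_expApply, ← iterDerivProd, expApply_eq_sum (hT _), hC, sum_mul]
    refine sum_congr rfl fun n _ => ?_
    rw [mul_comm, ← smul_eq_C_mul, map_smul, smul_comm]
  have hcomm : ∀ n, (Lop K ^ k) ((T ^ n) (iterDerivProd f 0)) =
      (T ^ n) ((Lop K ^ k) (iterDerivProd f 0)) := fun n => by
    rw [← mul_apply, ← (((Commute.refl (Lop K)).smul_left ℏ).pow_pow n k).eq, mul_apply]
  simp only [hterm, expApply_eq_sum (hT 0), map_sum, LinearMap.map_smul_of_tower, hcomm,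
    Lop_pow_apply_iterDerivProd, smul_sum]
  rw [sum_comm]
  exact sum_congr rfl fun n _ => sum_congr rfl fun M _ => smul_comm _ _ _

end StarProduct

open StarProduct

/-- recovering the ordinary product from the star product. -/
theorem ordinary_product_from_star {d : ℕ} (ℏ : R) (K' : Fin d → Fin d → R)
    (f : Fin d → Polynomial R) :
    (∏ i : Fin d, Polynomial.aeval (X i) (f i)) =
      finsum fun k : ℕ =>
        (k.factorial : ℚ)⁻¹ •
          ((-ℏ) ^ k •
            ∑ M ∈ Finset.piAntidiag (pairs d) k,
              Nat.multinomial (pairs d) M •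
                (multiStar ℏ K' (fun i => Polynomial.derivative^[rowSum M i] (f i)) *
                  ∏ p ∈ pairs d, C (K' p.1 p.2) ^ M p)) := by
  calc (∏ i : Fin d, Polynomial.aeval (X i) (f i))
      = (-(ℏ • Lop K')).expApply ((ℏ • Lop K').expApply (iterDerivProd f 0)) :=
        (Module.End.expApply_neg_expApply
          (smul_Lop_pow_apply_iterDerivProd_eq_zero ℏ K' f 0)).symm
    _ = _ := finsum_congr fun k => by
      rw [sum_multiStar_mul_prod_C, ← LinearMap.smul_apply ((-ℏ) ^ k), ← smul_pow, neg_smul]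

end
end

section
/- For the multiple star product in tensor form, associativity follows from the identity: [(F ⋆_K G)_⊗ ⋆_K H]_⊗ = exp{ℏ(𝒦_{x,y} + 𝒦_{x,z} + 𝒦_{y,z})}(F ⊗ G ⊗ H) = [F ⋆_K (G ⋆_K H)_⊗]_⊗, where 𝒦_{x,y}, 𝒦_{x,z}, 𝒦_{y,z} are the pairwise-commuting bi-differential operators Σ_{ij} K_{ij} ∂_{i,x}⊗∂_{j,y}⊗id etc., acting on the respective tensor slots. -/
/-!
All operators involved lie in the non-unital algebra generated by the partial derivatives
`∂/∂x_u`.  These commute with each other and strictly lower the total degree, so on the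
submodule of polynomials of total degree `< N` every element of that algebra is nilpotent,
and the exponential series become Mathlib's `IsNilpotent.exp`, for which
`exp (A + B) = exp A * exp B` whenever `A` and `B` commute.  Both sides of each identity are
then `exp (ℏ (𝒦_{x,y} + 𝒦_{x,z} + 𝒦_{y,z}))` applied to `F ⊗ G ⊗ H`.
-/

open MvPolynomial

theorem NonUnitalSubalgebra.sum_sum_smul_comp_mem {R M ι κ : Type*} [CommSemiring R]
    [AddCommMonoid M] [Module R M] [Fintype ι] [Fintype κ]
    {S : NonUnitalSubalgebra R (Module.End R M)}
    (K : ι → κ → R) {P : ι → Module.End R M} {Q : κ → Module.End R M} (hP : ∀ i, P i ∈ S)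
    (hQ : ∀ j, Q j ∈ S) : ∑ i, ∑ j, K i j • (P i ∘ₗ Q j) ∈ S :=
  sum_mem fun i _ => sum_mem fun j _ => SMulMemClass.smul_mem _ (mul_mem (hP i) (hQ j))

section ExpSeries

variable {R M : Type*} [CommRing R] [Algebra ℚ R] [AddCommGroup M] [Module R M] [Module ℚ M]
  [IsScalarTower ℚ R M]

-- `finsum` is `0` when infinitely many terms are nonzero; below, only finitely many are.
noncomputable def expSeries (ℏ : R) (L : Module.End R M) (p : M) : M :=
  ∑ᶠ n : ℕ, (n.factorial : ℚ)⁻¹ • (ℏ ^ n • (L ^ n) p)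

theorem expSeries_eq_exp_restrict (ℏ : R) {L : Module.End R M} {V : Submodule R M}
    (hV : ∀ v ∈ V, L v ∈ V) (hL : IsNilpotent (L.restrict hV)) {p : M} (hp : p ∈ V) :
    expSeries ℏ L p = IsNilpotent.exp (ℏ • L.restrict hV) ⟨p, hp⟩ := by
  obtain ⟨N, hN⟩ := hL
  have hpow : ∀ n, (((ℏ • L.restrict hV) ^ n) ⟨p, hp⟩ : M) = ℏ ^ n • (L ^ n) p := fun n => by
    rw [smul_pow, LinearMap.smul_apply, Submodule.coe_smul, Module.End.pow_restrict,
      LinearMap.restrict_apply]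
  have hvanish : ∀ n, N ≤ n → ℏ ^ n • (L ^ n) p = 0 := fun n hn => by
    rw [← hpow, pow_eq_zero_of_le hn (by rw [smul_pow, hN, smul_zero])]
    rfl
  rw [IsNilpotent.exp_eq_sum (k := N) (by rw [smul_pow, hN, smul_zero]), expSeries,
    finsum_eq_sum_of_support_subset (s := Finset.range N)]
  · simp only [LinearMap.sum_apply, Submodule.coe_sum, LinearMap.smul_apply,
      Submodule.coe_smul_of_tower, hpow]
  · intro n hn
    rw [Finset.coe_range, Set.mem_Iio]
    by_contra! hnN
    exact hn (by simp only [hvanish n hnN, smul_zero])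

theorem expSeries_expSeries (ℏ : R) {A B : Module.End R M} (hAB : Commute A B)
    {V : Submodule R M} (hAV : ∀ v ∈ V, A v ∈ V) (hBV : ∀ v ∈ V, B v ∈ V)
    (hA : IsNilpotent (A.restrict hAV)) (hB : IsNilpotent (B.restrict hBV)) {p : M} (hp : p ∈ V) :
    expSeries ℏ A (expSeries ℏ B p) = expSeries ℏ (A + B) p := by
  have hABV : ∀ v ∈ V, (A + B) v ∈ V := fun v hv => V.add_mem (hAV v hv) (hBV v hv)
  have hcomm : Commute (A.restrict hAV) (B.restrict hBV) := LinearMap.restrict_commute hAB hAV hBV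
  have hsum : (A + B).restrict hABV = A.restrict hAV + B.restrict hBV := rfl
  rw [expSeries_eq_exp_restrict ℏ hBV hB hp,
    expSeries_eq_exp_restrict ℏ hAV hA (Submodule.coe_mem _),
    expSeries_eq_exp_restrict ℏ hABV (hcomm.isNilpotent_add hA hB) hp, hsum, smul_add,
    IsNilpotent.exp_add_of_commute ((hcomm.smul_left ℏ).smul_right ℏ) (hA.smul ℏ) (hB.smul ℏ)]
  rfl

end ExpSeries

namespace MvPolynomial

variable {σ R : Type*} [CommSemiring R]

theorem pderiv_pderiv_comm (u v : σ) (p : MvPolynomial σ R) :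
    pderiv u (pderiv v p) = pderiv v (pderiv u p) := by
  classical
  induction p using MvPolynomial.induction_on with
  | C a => simp
  | add p q hp hq => simp [hp, hq]
  | mul_X p i hp =>
    simp only [pderiv_mul, map_add, hp, pderiv_X, Pi.single_apply]
    split_ifs <;> simp [add_right_comm]

variable (σ R) in
noncomputable def totalDegreeLT (k : ℕ) : Submodule R (MvPolynomial σ R) :=
  restrictSupport R {m | m.degree < k}

theorem mem_totalDegreeLT_iff {k : ℕ} {p : MvPolynomial σ R} :
    p ∈ totalDegreeLT σ R k ↔ ∀ m ∈ p.support, m.degree < k :=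
  mem_restrictSupport_iff R

theorem totalDegreeLT_mono {k l : ℕ} (h : k ≤ l) : totalDegreeLT σ R k ≤ totalDegreeLT σ R l :=
  restrictSupport_mono R fun _ hm => lt_of_lt_of_le hm h

theorem eq_zero_of_mem_totalDegreeLT_zero {p : MvPolynomial σ R} (hp : p ∈ totalDegreeLT σ R 0) :
    p = 0 := by
  rw [mem_totalDegreeLT_iff] at hp
  exact support_eq_empty.mp
    (Finset.eq_empty_of_forall_notMem fun m hm => Nat.not_lt_zero _ (hp m hm))

theorem mem_totalDegreeLT_totalDegree_succ (p : MvPolynomial σ R) :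
    p ∈ totalDegreeLT σ R (p.totalDegree + 1) :=
  mem_totalDegreeLT_iff.mpr fun _ hm => Nat.lt_succ_of_le (le_totalDegree hm)

theorem pderiv_mem_totalDegreeLT (u : σ) {k : ℕ} {p : MvPolynomial σ R}
    (hp : p ∈ totalDegreeLT σ R (k + 1)) : pderiv u p ∈ totalDegreeLT σ R k := by
  classical
  rw [mem_totalDegreeLT_iff] at hp ⊢
  intro m hm
  rw [mem_support_iff, coeff_pderiv] at hm
  have h := hp _ (mem_support_iff.mpr (left_ne_zero_of_mul hm))
  simp only [map_add, Finsupp.degree_single] at h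
  exact Nat.lt_of_succ_lt_succ h

variable (σ R) in
noncomputable def degreeLowering : NonUnitalSubalgebra R (Module.End R (MvPolynomial σ R)) where
  carrier := {L | ∀ k, ∀ p ∈ totalDegreeLT σ R (k + 1), L p ∈ totalDegreeLT σ R k}
  zero_mem' _ _ _ := Submodule.zero_mem _
  add_mem' hL hM k p hp := Submodule.add_mem _ (hL k p hp) (hM k p hp)
  mul_mem' hL hM k p hp := hL k _ (totalDegreeLT_mono k.le_succ (hM k p hp))
  smul_mem' r _ hL k p hp := Submodule.smul_mem _ r (hL k p hp)

theorem apply_mem_totalDegreeLT_of_mem_degreeLowering {L : Module.End R (MvPolynomial σ R)}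
    (hL : L ∈ degreeLowering σ R) (k : ℕ) :
    ∀ p ∈ totalDegreeLT σ R k, L p ∈ totalDegreeLT σ R k := by
  intro p hp
  cases k with
  | zero =>
    rw [eq_zero_of_mem_totalDegreeLT_zero hp, map_zero]
    exact Submodule.zero_mem _
  | succ k => exact totalDegreeLT_mono k.le_succ (hL k p hp)

theorem pow_apply_mem_totalDegreeLT_of_mem_degreeLowering {L : Module.End R (MvPolynomial σ R)}
    (hL : L ∈ degreeLowering σ R) (n k : ℕ) {p : MvPolynomial σ R}
    (hp : p ∈ totalDegreeLT σ R (k + n)) : (L ^ n) p ∈ totalDegreeLT σ R k := by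
  induction n generalizing p with
  | zero => simpa using hp
  | succ n ih =>
    rw [pow_succ, Module.End.mul_apply]
    exact ih (hL (k + n) p hp)

theorem pow_restrict_totalDegreeLT_eq_zero {L : Module.End R (MvPolynomial σ R)}
    (hL : L ∈ degreeLowering σ R) (k : ℕ) :
    (L.restrict (apply_mem_totalDegreeLT_of_mem_degreeLowering hL k)) ^ k = 0 := by
  refine LinearMap.ext fun ⟨p, hp⟩ => ?_
  rw [Module.End.pow_restrict, LinearMap.restrict_apply, LinearMap.zero_apply,
    Submodule.mk_eq_zero]
  exact eq_zero_of_mem_totalDegreeLT_zero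
    (pow_apply_mem_totalDegreeLT_of_mem_degreeLowering hL k 0 (by rwa [zero_add]))

variable (σ R) in
noncomputable def pderivAdjoin : NonUnitalSubalgebra R (Module.End R (MvPolynomial σ R)) :=
  NonUnitalAlgebra.adjoin R (Set.range fun u => (pderiv u).toLinearMap)

theorem pderivAdjoin_le_degreeLowering : pderivAdjoin σ R ≤ degreeLowering σ R :=
  NonUnitalAlgebra.adjoin_le <| Set.range_subset_iff.mpr fun u _ _ hp =>
    pderiv_mem_totalDegreeLT u hp

theorem commute_of_mem_pderivAdjoin {A B : Module.End R (MvPolynomial σ R)}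
    (hA : A ∈ pderivAdjoin σ R) (hB : B ∈ pderivAdjoin σ R) : Commute A B := by
  have hgen : ∀ u v : σ, Commute (pderiv (R := R) u).toLinearMap (pderiv v).toLinearMap :=
    fun u v => LinearMap.ext (pderiv_pderiv_comm u v)
  refine NonUnitalAlgebra.commute_of_mem_adjoin_of_forall_mem_commute hB ?_
  rintro _ ⟨v, rfl⟩
  refine (NonUnitalAlgebra.commute_of_mem_adjoin_of_forall_mem_commute hA ?_).symm
  rintro _ ⟨u, rfl⟩
  exact hgen v u

theorem sum_pderiv_mem_pderivAdjoin {ι : Type*} (s : Finset ι) (f : ι → σ) :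
    ∑ i ∈ s, (pderiv (R := R) (f i)).toLinearMap ∈ pderivAdjoin σ R :=
  sum_mem fun i _ => NonUnitalAlgebra.subset_adjoin R ⟨f i, rfl⟩

end MvPolynomial

theorem MvPolynomial.expSeries_expSeries_of_mem_pderivAdjoin {σ R : Type*} [CommRing R]
    [Algebra ℚ R] (ℏ : R) {A B : Module.End R (MvPolynomial σ R)} (hA : A ∈ pderivAdjoin σ R)
    (hB : B ∈ pderivAdjoin σ R) (p : MvPolynomial σ R) :
    expSeries ℏ A (expSeries ℏ B p) = expSeries ℏ (A + B) p :=
  expSeries_expSeries ℏ (commute_of_mem_pderivAdjoin hA hB) _ _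
    ⟨_, pow_restrict_totalDegreeLT_eq_zero (pderivAdjoin_le_degreeLowering hA) _⟩
    ⟨_, pow_restrict_totalDegreeLT_eq_zero (pderivAdjoin_le_degreeLowering hB) _⟩
    (mem_totalDegreeLT_totalDegree_succ p)

noncomputable section

variable {R : Type} [CommRing R] [Algebra ℚ R]

variable (a b c d : ℕ)

/-- ambient algebra: three groups of slots, each slot with `d` variables. -/
abbrev Amb (R : Type) [CommRing R] :=
  MvPolynomial ((Fin a ⊕ (Fin b ⊕ Fin c)) × Fin d) R

/-- total `x`-derivative `∂_{i,⊗^a}` acting on the first group. -/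
def Dx (i : Fin d) : Module.End R (Amb a b c d R) :=
  ∑ s : Fin a, (pderiv ((Sum.inl s : Fin a ⊕ (Fin b ⊕ Fin c)), i)).toLinearMap

def Dy (i : Fin d) : Module.End R (Amb a b c d R) :=
  ∑ s : Fin b, (pderiv ((Sum.inr (Sum.inl s) : Fin a ⊕ (Fin b ⊕ Fin c)), i)).toLinearMap

def Dz (i : Fin d) : Module.End R (Amb a b c d R) :=
  ∑ s : Fin c, (pderiv ((Sum.inr (Sum.inr s) : Fin a ⊕ (Fin b ⊕ Fin c)), i)).toLinearMap

def expApp (ℏ : R) (L : Module.End R (Amb a b c d R)) (p : Amb a b c d R) :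
    Amb a b c d R :=
  finsum fun n : ℕ => (n.factorial : ℚ)⁻¹ • (ℏ ^ n • ((L ^ n) p))

/-- tensor-form associativity via
`exp{ℏ(𝒦_{x,y}+𝒦_{x,z}+𝒦_{y,z})}`. -/
theorem tensor_star_assoc (ℏ : R) (K : Fin d → Fin d → R)
    (f : Fin a → MvPolynomial (Fin d) R) (g : Fin b → MvPolynomial (Fin d) R)
    (h : Fin c → MvPolynomial (Fin d) R) :
    let Kxy : Module.End R (Amb a b c d R) :=
      ∑ i : Fin d, ∑ j : Fin d, K i j • (Dx a b c d i ∘ₗ Dy a b c d j)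
    let Kxz : Module.End R (Amb a b c d R) :=
      ∑ i : Fin d, ∑ j : Fin d, K i j • (Dx a b c d i ∘ₗ Dz a b c d j)
    let Kyz : Module.End R (Amb a b c d R) :=
      ∑ i : Fin d, ∑ j : Fin d, K i j • (Dy a b c d i ∘ₗ Dz a b c d j)
    let FGH : Amb a b c d R :=
      (∏ s : Fin a, rename (fun t => ((Sum.inl s : Fin a ⊕ (Fin b ⊕ Fin c)), t)) (f s)) *
        (∏ s : Fin b, rename (fun t => ((Sum.inr (Sum.inl s) : Fin a ⊕ (Fin b ⊕ Fin c)), t)) (g s)) *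
          ∏ s : Fin c, rename (fun t => ((Sum.inr (Sum.inr s) : Fin a ⊕ (Fin b ⊕ Fin c)), t)) (h s)
    expApp a b c d ℏ (Kxz + Kyz) (expApp a b c d ℏ Kxy FGH) =
        expApp a b c d ℏ (Kxy + Kxz + Kyz) FGH ∧
      expApp a b c d ℏ (Kxy + Kxz) (expApp a b c d ℏ Kyz FGH) =
        expApp a b c d ℏ (Kxy + Kxz + Kyz) FGH := by
  intro Kxy Kxz Kyz FGH
  have hDx : ∀ i, Dx a b c d i ∈ pderivAdjoin _ R := fun i => sum_pderiv_mem_pderivAdjoin _ _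
  have hDy : ∀ i, Dy a b c d i ∈ pderivAdjoin _ R := fun i => sum_pderiv_mem_pderivAdjoin _ _
  have hDz : ∀ i, Dz a b c d i ∈ pderivAdjoin _ R := fun i => sum_pderiv_mem_pderivAdjoin _ _
  have hKxy : Kxy ∈ pderivAdjoin _ R := NonUnitalSubalgebra.sum_sum_smul_comp_mem K hDx hDy
  have hKxz : Kxz ∈ pderivAdjoin _ R := NonUnitalSubalgebra.sum_sum_smul_comp_mem K hDx hDz
  have hKyz : Kyz ∈ pderivAdjoin _ R := NonUnitalSubalgebra.sum_sum_smul_comp_mem K hDy hDz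
  constructor
  · rw [show Kxy + Kxz + Kyz = Kxz + Kyz + Kxy by abel]
    exact expSeries_expSeries_of_mem_pderivAdjoin ℏ (add_mem hKxz hKyz) hKxy FGH
  · exact expSeries_expSeries_of_mem_pderivAdjoin ℏ (add_mem hKxy hKxz) hKyz FGH

end
end
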